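/- Let ν > 0, let τ₊, τ₋ > 0 satisfy τ₊ + τ₋ = 1, and let Φ₊, Φ₋, j be real constants with τ₊Φ₊ − τ₋Φ₋ = j. Let c₊, c₋ : [0,1] → ℝ be differentiable and E : [0,1] → ℝ be twice differentiable, satisfying the dimensionless steady-state electrodiffusion system on [0,1] together with the charge-neutral boundary conditions c₊(0) = c₋(0) = c₀ and c₊(1) = c₋(1) = c₁. Then E satisfies the Painlevé II-type equation: for every x ∈ [0,1], νE″(x) = (ν/2)E(x)³ + [2c₀ − (ν/2)E(0)² + {2(c₁ − c₀) + (ν/2)(E(0)² − E(1)²)}x]E(x) + (τ₋ − τ₊){2(c₁ − c₀) + (ν/2)(E(0)² − E(1)²)} − 2j. -/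

import Mathlib

/-!
Adding the two Nernst–Planck equations and using Poisson's equation `ν E' = c₊ - c₋` shows that
`c₊ + c₋ - (ν/2) E² + (Φ₊ + Φ₋) x` is a first integral. Evaluating it at `x = 0` and `x = 1`
expresses `c₊ + c₋` and `Φ₊ + Φ₋` through the boundary data, and `τ₊ + τ₋ = 1` turns the current
into `Φ₊ - Φ₋ = 2 j - (τ₊ - τ₋)(Φ₊ + Φ₋)`. Differentiating Poisson's equation once more gives
`ν E'' = E (c₊ + c₋) - (Φ₊ - Φ₋)`, and substituting these three identities yields the equation.
-/

open Set

noncomputable def electrodiffusionFirstIntegral (ν Φp Φm : ℝ) (cp cm E : ℝ → ℝ) (x : ℝ) : ℝ :=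
  cp x + cm x - ν / 2 * E x ^ 2 + (Φp + Φm) * x

theorem hasDerivAt_electrodiffusionFirstIntegral {ν Φp Φm x E'x : ℝ} {cp cm E : ℝ → ℝ}
    (hcp : HasDerivAt cp (E x * cp x - Φp) x) (hcm : HasDerivAt cm (-(E x) * cm x - Φm) x)
    (hE : HasDerivAt E E'x x) (hpoisson : ν * E'x = cp x - cm x) :
    HasDerivAt (electrodiffusionFirstIntegral ν Φp Φm cp cm E) 0 x := by
  unfold electrodiffusionFirstIntegral
  refine (((hcp.add hcm).sub ((hE.pow 2).const_mul (ν / 2))).add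
    ((hasDerivAt_id' x).const_mul (Φp + Φm))).congr_deriv ?_
  linear_combination (-E x) * hpoisson

theorem eq_of_hasDerivAt_zero_on_Icc {F : Type*} [NormedAddCommGroup F] [NormedSpace ℝ F]
    {f : ℝ → F} {a b : ℝ} (hf : ∀ x ∈ Icc a b, HasDerivAt f 0 x) :
    ∀ x ∈ Icc a b, f x = f a :=
  constant_of_has_deriv_right_zero (fun x hx => (hf x hx).continuousAt.continuousWithinAt)
    fun x hx => (hf x (mem_Icc_of_Ico hx)).hasDerivWithinAt

theorem HasDerivAt.unique_of_eqOn_Icc {F : Type*} [NormedAddCommGroup F] [NormedSpace ℝ F]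
    {f g : ℝ → F} {f' g' : F} {a b x : ℝ} (hab : a < b) (hx : x ∈ Icc a b)
    (hfg : EqOn f g (Icc a b)) (hf : HasDerivAt f f' x) (hg : HasDerivAt g g' x) : f' = g' :=
  (uniqueDiffOn_Icc hab x hx).eq_deriv _ hf.hasDerivWithinAt
    (hg.hasDerivWithinAt.congr (fun _ hy => hfg hy) (hfg hx))

theorem electrodiffusion_painleve_full_general
    (ν Φp Φm c₀ c₁ τp τm j : ℝ) (hτ : τp + τm = 1)
    (hj : τp * Φp - τm * Φm = j)
    (cp cm E E' E'' : ℝ → ℝ)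
    (hcp : ∀ x ∈ Set.Icc (0:ℝ) 1, HasDerivAt cp (E x * cp x - Φp) x)
    (hcm : ∀ x ∈ Set.Icc (0:ℝ) 1, HasDerivAt cm (-(E x) * cm x - Φm) x)
    (hE : ∀ x ∈ Set.Icc (0:ℝ) 1, HasDerivAt E (E' x) x)
    (hE' : ∀ x ∈ Set.Icc (0:ℝ) 1, ν * E' x = cp x - cm x)
    (hE'' : ∀ x ∈ Set.Icc (0:ℝ) 1, HasDerivAt E' (E'' x) x)
    (hbc0p : cp 0 = c₀) (hbc0m : cm 0 = c₀)
    (hbc1p : cp 1 = c₁) (hbc1m : cm 1 = c₁) :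
    ∀ x ∈ Set.Icc (0:ℝ) 1,
      ν * E'' x = ν / 2 * (E x) ^ 3
        + (2 * c₀ - ν / 2 * (E 0) ^ 2
            + (2 * (c₁ - c₀) + ν / 2 * ((E 0) ^ 2 - (E 1) ^ 2)) * x) * E x
        + (τm - τp) * (2 * (c₁ - c₀) + ν / 2 * ((E 0) ^ 2 - (E 1) ^ 2))
        - 2 * j := by
  have hconst := eq_of_hasDerivAt_zero_on_Icc fun x hx =>
    hasDerivAt_electrodiffusionFirstIntegral (hcp x hx) (hcm x hx) (hE x hx) (hE' x hx)
  simp only [electrodiffusionFirstIntegral, hbc0p, hbc0m, mul_zero, add_zero] at hconst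
  have hsum : Φp + Φm = 2 * (c₀ - c₁) + ν / 2 * (E 1 ^ 2 - E 0 ^ 2) := by
    have h1 := hconst 1 (right_mem_Icc.2 zero_le_one)
    rw [hbc1p, hbc1m] at h1
    linarith
  have hdiff : Φp - Φm = 2 * j - (τp - τm) * (Φp + Φm) := by
    linear_combination 2 * hj + (Φm - Φp) * hτ
  intro x hx
  have hsecond : ν * E'' x = E x * (cp x + cm x) - (Φp - Φm) := by
    have h := ((hE'' x hx).const_mul ν).unique_of_eqOn_Icc zero_lt_one hx (fun y hy => hE' y hy)
      ((hcp x hx).sub (hcm x hx))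
    linear_combination h
  linear_combination hsecond + E x * hconst x hx - hdiff + (τp - τm - E x * x) * hsum

/-- the full Painlevé II-type boundary-value ODE for the field. -/
theorem electrodiffusion_painleve_full
    (ν Φp Φm c₀ c₁ τp τm j : ℝ) (hν : 0 < ν)
    (hτp : 0 < τp) (hτm : 0 < τm) (hτ : τp + τm = 1)
    (hj : τp * Φp - τm * Φm = j)
    (cp cm E E' E'' : ℝ → ℝ)
    (hcp : ∀ x ∈ Set.Icc (0:ℝ) 1, HasDerivAt cp (E x * cp x - Φp) x)
    (hcm : ∀ x ∈ Set.Icc (0:ℝ) 1, HasDerivAt cm (-(E x) * cm x - Φm) x)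
    (hE : ∀ x ∈ Set.Icc (0:ℝ) 1, HasDerivAt E (E' x) x)
    (hE' : ∀ x ∈ Set.Icc (0:ℝ) 1, ν * E' x = cp x - cm x)
    (hE'' : ∀ x ∈ Set.Icc (0:ℝ) 1, HasDerivAt E' (E'' x) x)
    (hbc0p : cp 0 = c₀) (hbc0m : cm 0 = c₀)
    (hbc1p : cp 1 = c₁) (hbc1m : cm 1 = c₁) :
    ∀ x ∈ Set.Icc (0:ℝ) 1,
      ν * E'' x = ν / 2 * (E x) ^ 3
        + (2 * c₀ - ν / 2 * (E 0) ^ 2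
            + (2 * (c₁ - c₀) + ν / 2 * ((E 0) ^ 2 - (E 1) ^ 2)) * x) * E x
        + (τm - τp) * (2 * (c₁ - c₀) + ν / 2 * ((E 0) ^ 2 - (E 1) ^ 2))
        - 2 * j :=
  electrodiffusion_painleve_full_general ν Φp Φm c₀ c₁ τp τm j hτ hj cp cm E E' E'' hcp hcm hE hE'
    hE'' hbc0p hbc0m hbc1p hbc1m
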